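/- Let T ∈ ℤ[X]. For every integer k ≥ 1 there exist polynomials q_{k,1}, …, q_{k,k−1} ∈ ℤ[X], depending only on T and k (not on B or P), with deg(q_{k,j}) ≤ (k−j)·deg(T), such that for all polynomials B, P ∈ ℚ[X] the following identity holds: L^k(P) = S_k + Σ_{j=1}^{k−1} q_{k,j}·S_j, where L is the operator L(Q) := T·Q′ + B·Q, L^k denotes its k-fold iterate, and the polynomials S_j are defined by S_0 := P and S_{j+1} := T·S_j′ − j·T′·S_j + B·S_j. -/

import Mathlib

/-!
Write `L Q = T·Q' + B·Q`. Expanding `L(q·S_j) = q·S_{j+1} + (j·T'·q + T·q')·S_j` shows that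
`L^k P = Σ_{j ≤ k} q_{k,j}·S_j`, where the coefficients obey a recursion in `k` that involves
only `T`; so they have integer coefficients when `T` does. Each step raises the degree
of a coefficient by at most `deg T` while the index `j` advances by at most one, which gives
`deg q_{k,j} ≤ (k - j)·deg T`. Finally `q_{k,k} = 1` and `q_{k,0} = 0` for `k ≥ 1`.
-/

/-- The polynomials `S_j`, defined by `S_0 = P`, `S_{j+1} = T·S_j′ − j·T′·S_j + B·S_j`
(realizing `T^j·(d/dX + A)^j P` when `B = T·A`). -/
noncomputable def Sseq (T B P : Polynomial ℚ) : ℕ → Polynomial ℚ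
  | 0 => P
  | j + 1 => T * Polynomial.derivative (Sseq T B P j)
      - (j : Polynomial ℚ) * Polynomial.derivative T * Sseq T B P j
      + B * Sseq T B P j

open Polynomial Finset

section PadeCoeff

variable {R : Type*} [CommRing R]

noncomputable def padeCoeff (T : R[X]) : ℕ → ℕ → R[X]
  | 0, 0 => 1
  | 0, _ + 1 => 0
  | _ + 1, 0 => 0
  | k + 1, j + 1 => padeCoeff T k j
      + ((j + 1 : ℕ) : R[X]) * derivative T * padeCoeff T k (j + 1)
      + T * derivative (padeCoeff T k (j + 1))

variable (T : R[X])

theorem padeCoeff_succ_zero (k : ℕ) : padeCoeff T (k + 1) 0 = 0 := rfl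

theorem padeCoeff_succ_succ (k j : ℕ) :
    padeCoeff T (k + 1) (j + 1) = padeCoeff T k j
      + ((j + 1 : ℕ) : R[X]) * derivative T * padeCoeff T k (j + 1)
      + T * derivative (padeCoeff T k (j + 1)) := rfl

theorem derivative_padeCoeff_zero (k : ℕ) : derivative (padeCoeff T k 0) = 0 := by
  cases k <;> simp [padeCoeff]

theorem padeCoeff_eq_zero_of_lt {k j : ℕ} (h : k < j) : padeCoeff T k j = 0 := by
  induction k generalizing j with
  | zero => obtain ⟨j, rfl⟩ := Nat.exists_eq_add_one_of_ne_zero h.ne'; rfl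
  | succ k ih =>
    obtain ⟨j, rfl⟩ := Nat.exists_eq_add_one_of_ne_zero (Nat.ne_zero_of_lt h)
    simp [padeCoeff_succ_succ, ih (j := j) (by omega), ih (j := j + 1) (by omega)]

theorem padeCoeff_self (k : ℕ) : padeCoeff T k k = 1 := by
  induction k with
  | zero => rfl
  | succ k ih => simp [padeCoeff_succ_succ, ih, padeCoeff_eq_zero_of_lt T k.lt_succ_self]

theorem map_padeCoeff {S : Type*} [CommRing S] (f : R →+* S) (k j : ℕ) :
    (padeCoeff T k j).map f = padeCoeff (T.map f) k j := by
  induction k generalizing j with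
  | zero => cases j <;> simp [padeCoeff]
  | succ k ih =>
    cases j with
    | zero => simp [padeCoeff_succ_zero]
    | succ j =>
      simp only [padeCoeff_succ_succ, Polynomial.map_add, Polynomial.map_mul,
        Polynomial.map_natCast, ← derivative_map, ih]

theorem natDegree_padeCoeff_le (k j : ℕ) :
    (padeCoeff T k j).natDegree ≤ (k - j) * T.natDegree := by
  induction k generalizing j with
  | zero => cases j <;> simp [padeCoeff]
  | succ k ih =>
    cases j with
    | zero => simp [padeCoeff_succ_zero]
    | succ j =>
      rw [padeCoeff_succ_succ, Nat.add_sub_add_right]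
      rcases lt_or_ge j k with hjk | hkj
      · have hq := ih (j + 1)
        have hsplit : (k - j) * T.natDegree = (k - (j + 1)) * T.natDegree + T.natDegree := by
          rw [show k - j = k - (j + 1) + 1 by omega, add_one_mul]
        refine natDegree_add_le_of_degree_le (natDegree_add_le_of_degree_le (ih j) ?_) ?_
        · have hT' := (natDegree_derivative_le T).trans (Nat.sub_le _ 1)
          have := natDegree_mul_le_of_le
            (natDegree_mul_le_of_le (natDegree_natCast (R := R) (j + 1)).le hT') hq
          omega
        · have hq' := (natDegree_derivative_le _).trans ((Nat.sub_le _ 1).trans hq)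
          have := natDegree_mul_le_of_le (le_refl T.natDegree) hq'
          omega
      · rw [padeCoeff_eq_zero_of_lt T (Nat.lt_succ_of_le hkj), derivative_zero, mul_zero,
          mul_zero, add_zero, add_zero]
        exact ih j

end PadeCoeff

noncomputable def padeOp (T B Q : ℚ[X]) : ℚ[X] := T * derivative Q + B * Q

section Sseq

variable (T B P : ℚ[X])

theorem padeOp_mul_Sseq (q : ℚ[X]) (j : ℕ) :
    padeOp T B (q * Sseq T B P j) = q * Sseq T B P (j + 1)
      + ((j : ℚ[X]) * derivative T * q + T * derivative q) * Sseq T B P j := by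
  simp only [padeOp, Sseq, derivative_mul]
  ring

theorem padeOp_sum {ι : Type*} (s : Finset ι) (f : ι → ℚ[X]) :
    padeOp T B (∑ i ∈ s, f i) = ∑ i ∈ s, padeOp T B (f i) := by
  simp only [padeOp, derivative_sum, mul_sum, ← sum_add_distrib]

theorem padeOp_iterate_eq_sum (k : ℕ) :
    (padeOp T B)^[k] P = ∑ j ∈ range (k + 1), padeCoeff T k j * Sseq T B P j := by
  induction k with
  | zero => simp [padeCoeff, Sseq]
  | succ k ih =>
    set g : ℕ → ℚ[X] := fun j ↦
      (j : ℚ[X]) * derivative T * padeCoeff T k j + T * derivative (padeCoeff T k j)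
    have hg_zero : g 0 = 0 := by simp [g, derivative_padeCoeff_zero]
    have hg_top : g (k + 1) = 0 := by simp [g, padeCoeff_eq_zero_of_lt T k.lt_succ_self]
    have hcoeff (j : ℕ) : padeCoeff T (k + 1) (j + 1) = padeCoeff T k j + g (j + 1) := by
      simp only [padeCoeff_succ_succ, g]
      push_cast
      ring
    calc (padeOp T B)^[k + 1] P
        = ∑ j ∈ range (k + 1), padeCoeff T k j * Sseq T B P (j + 1)
          + ∑ j ∈ range (k + 1), g j * Sseq T B P j := by
          rw [Function.iterate_succ_apply', ih, padeOp_sum, ← sum_add_distrib]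
          exact sum_congr rfl fun j _ ↦ padeOp_mul_Sseq T B P _ j
      _ = ∑ j ∈ range (k + 1), padeCoeff T k j * Sseq T B P (j + 1)
          + ∑ j ∈ range (k + 1), g (j + 1) * Sseq T B P (j + 1) := by
          have hshift := sum_range_succ' (fun j ↦ g j * Sseq T B P j) (k + 1)
          rw [sum_range_succ, hg_top, hg_zero] at hshift
          simpa using hshift
      _ = ∑ j ∈ range (k + 2), padeCoeff T (k + 1) j * Sseq T B P j := by
          rw [sum_range_succ' (fun j ↦ padeCoeff T (k + 1) j * Sseq T B P j),
            padeCoeff_succ_zero, zero_mul, add_zero, ← sum_add_distrib]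
          simp only [hcoeff, add_mul]

end Sseq

theorem pade_operator_identity_general (T : Polynomial ℤ) (k : ℕ) :
    ∃ q : ℕ → Polynomial ℤ,
      (∀ j : ℕ, 1 ≤ j → j ≤ k - 1 → (q j).natDegree ≤ (k - j) * T.natDegree) ∧
      ∀ B P : Polynomial ℚ,
        (fun Q : Polynomial ℚ =>
            T.map (Int.castRingHom ℚ) * Polynomial.derivative Q + B * Q)^[k] P
          = Sseq (T.map (Int.castRingHom ℚ)) B P k
            + ∑ j ∈ Finset.Icc 1 (k - 1),
                (q j).map (Int.castRingHom ℚ) * Sseq (T.map (Int.castRingHom ℚ)) B P j := by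
  refine ⟨padeCoeff T k, fun j _ _ ↦ natDegree_padeCoeff_le T k j, fun B P ↦ ?_⟩
  change (padeOp _ B)^[k] P = _
  simp only [padeOp_iterate_eq_sum, map_padeCoeff]
  cases k with
  | zero => simp [padeCoeff_self]
  | succ n =>
    rw [sum_range_succ, sum_range_succ', padeCoeff_self, padeCoeff_succ_zero, Nat.add_sub_cancel,
      ← Ico_add_one_right_eq_Icc, sum_Ico_eq_sum_range, Nat.add_sub_cancel]
    simp only [zero_mul, add_zero, one_mul, add_comm 1]
    exact add_comm _ _

/-- **Relationship between the two kinds of Padé polynomials** (Lemma 6.1).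
For every `k ≥ 1` there exist polynomials `q_{k,1}, …, q_{k,k−1} ∈ ℤ[X]`, depending only on
`T` and `k`, with `deg(q_{k,j}) ≤ (k−j)·deg(T)`, such that for all `B, P ∈ ℚ[X]`:
`L^k(P) = S_k + Σ_{j=1}^{k−1} q_{k,j}·S_j`, where `L(Q) = T·Q′ + B·Q`. -/
theorem pade_operator_identity (T : Polynomial ℤ) (k : ℕ) (hk : 1 ≤ k) :
    ∃ q : ℕ → Polynomial ℤ,
      (∀ j : ℕ, 1 ≤ j → j ≤ k - 1 → (q j).natDegree ≤ (k - j) * T.natDegree) ∧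
      ∀ B P : Polynomial ℚ,
        (fun Q : Polynomial ℚ =>
            T.map (Int.castRingHom ℚ) * Polynomial.derivative Q + B * Q)^[k] P
          = Sseq (T.map (Int.castRingHom ℚ)) B P k
            + ∑ j ∈ Finset.Icc 1 (k - 1),
                (q j).map (Int.castRingHom ℚ) * Sseq (T.map (Int.castRingHom ℚ)) B P j :=
  pade_operator_identity_general T k
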